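/- arXiv:1901.06055 — 2 statements merged into one kernel-verified Lean document; each statement's English description precedes it below -/
import Mathlib

section
/- Suppose κ is a cardinal such that 𝔰(ℝ) ≤ κ and κ = cof([κ]^{ℵ₀}, ⊆). Then 𝔷 ≤ κ; that is, there is an infinite compact Hausdorff space of weight at most κ containing no non-trivial convergent sequence. -/
open Cardinal Filter

/-- An open set `U` *splits* `A` if both `A ∩ U` and `A \ U` are infinite. -/
def Splits {X : Type*} (U A : Set X) : Prop := (A ∩ U).Infinite ∧ (A \ U).Infinite

/-- The splitting number of a topological space: the smallest cardinality of a family of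
open sets splitting every infinite subset. -/
noncomputable def splittingNumber (X : Type*) [TopologicalSpace X] : Cardinal :=
  sInf {c : Cardinal | ∃ 𝒰 : Set (Set X), (∀ U ∈ 𝒰, IsOpen U) ∧
    (∀ A : Set X, A.Infinite → ∃ U ∈ 𝒰, Splits U A) ∧ c = #𝒰}


/-- `cof([α]^{ℵ₀}, ⊆)`: the smallest cardinality of a family of countable subsets of `α`
that is cofinal in the countable subsets of `α` under inclusion. -/
noncomputable def cofCountableSubsets (α : Type*) : Cardinal :=
  sInf {c : Cardinal | ∃ 𝒞 : Set (Set α), (∀ A ∈ 𝒞, A.Countable) ∧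
    (∀ B : Set α, B.Countable → ∃ A ∈ 𝒞, B ⊆ A) ∧ c = #𝒞}

/-!
Index the coordinates of the Cantor cube `2^I` by a well-order `I` of type `κ.ord`, and take for
`X` the closure of countably many points `pₙ` whose coordinates are defined by recursion along `I`.

Since `cof([κ]^ℵ₀) = κ`, `κ` has uncountable cofinality, so countable sets of coordinates are
bounded, and `κ` sequences of coordinates `c` cover all countable sets of coordinates. A splitting
family on `ℝ`, refined along the connected components of its members and pulled back to `2^ℕ`,
gives `κ` open sets `U ⊆ 2^ℕ` such that every infinite set has infinitely many points in `U` and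
infinitely many outside `closure U`. Every pair `(c, U)` is assigned cofinally many coordinates `j`,
at which `pₙ` records whether its trace on `c` lies in `U`; on `X`, `z j = 1` then forces the trace
of `z` into `closure U` and `z j = 0` forces it out of `U`. An injective sequence converging in `X`
has injective traces on some `c`; splitting them by some `U` contradicts that the coordinate `j` of
the sequence is eventually constant.
-/

universe u

open Set Topology Function

theorem exists_isOpen_splits {A : Set ℝ} (hA : A.Infinite) : ∃ U, IsOpen U ∧ Splits U A := by
  have := hA.to_subtype
  obtain ⟨f, hf⟩ := Infinite.exists_strictMono_or_strictAnti A
  set b : ℕ → ℝ := fun n => f n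
  have hb : StrictMono b ∨ StrictAnti b :=
    hf.imp (Subtype.strictMono_coe _).comp (Subtype.strictMono_coe _).comp_strictAnti
  have hbA : ∀ n, b n ∈ A := fun n => (f n).2
  -- the odd terms lie between consecutive even terms, the even terms do not
  refine ⟨⋃ n, Ioo (b (2 * n)) (b (2 * n + 2)) ∪ Ioo (b (2 * n + 2)) (b (2 * n)),
    isOpen_iUnion fun _ => isOpen_Ioo.union isOpen_Ioo, ?_, ?_⟩
  · refine infinite_of_injective_forall_mem (f := fun n => b (2 * n + 1))
      (fun m n h => by have := hb.elim (·.injective h) (·.injective h); omega)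
      fun n => ⟨hbA _, mem_iUnion.2 ⟨n, ?_⟩⟩
    rcases hb with hb | hb
    · exact .inl ⟨hb (by omega), hb (by omega)⟩
    · exact .inr ⟨hb (by omega), hb (by omega)⟩
  · refine infinite_of_injective_forall_mem (f := fun n => b (2 * n))
      (fun m n h => by have := hb.elim (·.injective h) (·.injective h); omega)
      fun m => ⟨hbA _, ?_⟩
    simp only [mem_iUnion, mem_union, mem_Ioo, not_exists]
    intro n
    rcases hb with hb | hb
    · simp only [hb.lt_iff_lt]; omega
    · simp only [hb.lt_iff_gt]; omega

theorem exists_splitting_family_card_eq (X : Type*) [TopologicalSpace X]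
    (h : ∀ A : Set X, A.Infinite → ∃ U, IsOpen U ∧ Splits U A) :
    ∃ 𝒰 : Set (Set X), (∀ U ∈ 𝒰, IsOpen U) ∧ (∀ A : Set X, A.Infinite → ∃ U ∈ 𝒰, Splits U A) ∧
      #𝒰 = splittingNumber X :=
  (csInf_mem ⟨_, {U | IsOpen U}, fun _ hU => hU, fun A hA => h A hA, rfl⟩ :
    splittingNumber X ∈ _).imp fun _ ⟨ho, hs, he⟩ => ⟨ho, hs, he.symm⟩

theorem one_lt_card_of_splits {X : Type*} {𝒰 : Set (Set X)}
    (h : ∀ A : Set X, A.Infinite → ∃ U ∈ 𝒰, Splits U A) [Infinite X] : 1 < #𝒰 := by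
  by_contra! h𝒰
  obtain ⟨U, hU, hUuniv⟩ := h univ infinite_univ
  obtain ⟨V, hV, hVU⟩ := h U (by simpa using hUuniv.1)
  rw [mk_le_one_iff_set_subsingleton.1 h𝒰 hV hU] at hVU
  simpa using hVU.2

theorem Set.OrdConnected.finite_closure_diff {α : Type*} [TopologicalSpace α] [LinearOrder α]
    [OrderTopology α] {s : Set α} (hs : s.OrdConnected) : (closure s \ s).Finite := by
  have hsub : closure s \ s ⊆ {a | IsGLB s a} ∪ {a | IsLUB s a} := by
    rintro x ⟨hxc, hxs⟩
    by_cases hl : x ∈ lowerBounds s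
    · exact .inl (isGLB_of_mem_closure hl hxc)
    refine .inr (isLUB_of_mem_closure (fun b hb => ?_) hxc)
    obtain ⟨a, ha, hax⟩ := not_forall₂.1 hl
    by_contra! hxb
    exact hxs (hs.out ha hb ⟨(not_le.1 hax).le, hxb.le⟩)
  exact ((Subsingleton.finite fun _ ha _ hb => IsGLB.unique ha hb).union
    (Subsingleton.finite fun _ ha _ hb => IsLUB.unique ha hb)).subset hsub

theorem Set.Infinite.exists_infinite_fiber {α β : Type*} {s : Set α} (hs : s.Infinite)
    {f : α → β} (hf : (f '' s).Finite) : ∃ a ∈ s, (s ∩ f ⁻¹' {f a}).Infinite := by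
  by_contra! h
  have hcover : s ⊆ ⋃ b ∈ f '' s, s ∩ f ⁻¹' {b} := fun a ha =>
    mem_biUnion (mem_image_of_mem f ha) ⟨ha, rfl⟩
  refine hs ((hf.biUnion fun b hb => ?_).subset hcover)
  obtain ⟨a, ha, rfl⟩ := hb
  exact h a ha

def SplitsStrongly {X : Type*} [TopologicalSpace X] (U A : Set X) : Prop :=
  (A ∩ U).Infinite ∧ (A \ closure U).Infinite

theorem SplitsStrongly.preimage {X Y : Type*} [TopologicalSpace X] [TopologicalSpace Y]
    {e : X → Y} (he : Continuous e) {W : Set Y} {A : Set X} (h : SplitsStrongly W (e '' A)) :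
    SplitsStrongly (e ⁻¹' W) A := by
  refine ⟨Infinite.of_image e ?_, Infinite.of_image e (h.2.mono ?_)⟩
  · rw [image_inter_preimage]
    exact h.1
  · rintro _ ⟨⟨x, hx, rfl⟩, hxW⟩
    exact ⟨x, ⟨hx, fun hcl => hxW (he.closure_preimage_subset W hcl)⟩, rfl⟩

section ComponentRep

variable {U : Set ℝ} {x y : ℝ}

noncomputable def componentRep (U : Set ℝ) (x : ℝ) : ℚ :=
  Classical.epsilon fun q : ℚ => (q : ℝ) ∈ connectedComponentIn U x

theorem componentRep_mem (hU : IsOpen U) (hx : x ∈ U) :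
    (componentRep U x : ℝ) ∈ connectedComponentIn U x :=
  Classical.epsilon_spec <| Rat.denseRange_cast.exists_mem_open hU.connectedComponentIn
    ⟨x, mem_connectedComponentIn hx⟩

theorem componentRep_eq_of_mem (hy : y ∈ connectedComponentIn U x) :
    componentRep U y = componentRep U x := by
  rw [componentRep, componentRep, connectedComponentIn_eq hy]

theorem componentRep_eq_iff (hU : IsOpen U) (hx : x ∈ U) (hy : y ∈ U) :
    componentRep U y = componentRep U x ↔ y ∈ connectedComponentIn U x := by
  refine ⟨fun h => ?_, componentRep_eq_of_mem⟩
  have hxy := componentRep_mem hU hy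
  rw [h] at hxy
  rw [connectedComponentIn_eq (componentRep_mem hU hx), ← connectedComponentIn_eq hxy]
  exact mem_connectedComponentIn hy

def componentUnion (U V : Set ℝ) : Set ℝ := {x | x ∈ U ∧ (componentRep U x : ℝ) ∈ V}

theorem isOpen_componentUnion (hU : IsOpen U) (V : Set ℝ) : IsOpen (componentUnion U V) :=
  isOpen_iff_mem_nhds.2 fun _ hx => Filter.mem_of_superset
    (hU.connectedComponentIn.mem_nhds (mem_connectedComponentIn hx.1)) fun _ hy =>
      ⟨connectedComponentIn_subset _ _ hy, componentRep_eq_of_mem hy ▸ hx.2⟩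

theorem componentUnion_singleton (hU : IsOpen U) (hx : x ∈ U) :
    componentUnion U {(componentRep U x : ℝ)} = connectedComponentIn U x := by
  ext y
  simp only [componentUnion, mem_singleton_iff, Rat.cast_inj]
  exact ⟨fun ⟨hy, h⟩ => (componentRep_eq_iff hU hx hy).1 h,
    fun hy => ⟨connectedComponentIn_subset _ _ hy, componentRep_eq_of_mem hy⟩⟩

theorem closure_componentUnion_disjoint (hU : IsOpen U) (V : Set ℝ) :
    Disjoint (componentUnion U Vᶜ) (closure (componentUnion U V)) :=
  Disjoint.closure_right (disjoint_left.2 fun _ hx hx' => hx.2 hx'.2)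
    (isOpen_componentUnion hU _)

end ComponentRep

/-- If the components of `U` meeting `A` have infinitely many representatives, split those;
otherwise one component `C` meets `A` infinitely often, and `A \ U` misses `closure C` except
for at most the two endpoints of `C`. -/
theorem exists_splitsStrongly_componentUnion {U A : Set ℝ} (hU : IsOpen U) (hUA : Splits U A)
    {𝒱 : Set (Set ℝ)} (h𝒱 : ∀ R : Set ℝ, R.Infinite → ∃ V ∈ 𝒱, Splits V R) :
    ∃ V ∈ 𝒱 ∪ range fun q : ℚ => {(q : ℝ)}, SplitsStrongly (componentUnion U V) A := by
  set r : ℝ → ℝ := fun x => componentRep U x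
  by_cases hR : (r '' (A ∩ U)).Infinite
  · obtain ⟨V, hV, hVR⟩ := h𝒱 _ hR
    have key : ∀ V', (r '' (A ∩ U) ∩ V').Infinite → (A ∩ componentUnion U V').Infinite :=
      fun V' h => Infinite.of_image r <| h.mono <| by
        rintro _ ⟨⟨x, hx, rfl⟩, hxV⟩
        exact ⟨x, ⟨hx.1, hx.2, hxV⟩, rfl⟩
    refine ⟨V, .inl hV, key V hVR.1, (key Vᶜ hVR.2).mono fun x hx => ⟨hx.1, ?_⟩⟩
    exact disjoint_left.1 (closure_componentUnion_disjoint hU V) hx.2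
  · obtain ⟨x, hx, hxinf⟩ := hUA.1.exists_infinite_fiber (not_infinite.1 hR)
    refine ⟨_, .inr ⟨componentRep U x, rfl⟩, ⟨hxinf.mono ?_, ?_⟩⟩
    · exact fun y ⟨⟨hyA, hyU⟩, hy⟩ => ⟨hyA, hyU, hy⟩
    rw [componentUnion_singleton hU hx.2]
    have hfin : (closure (connectedComponentIn U x) \ connectedComponentIn U x).Finite :=
      isPreconnected_connectedComponentIn.ordConnected.finite_closure_diff
    refine (hUA.2.sdiff hfin).mono ?_
    rintro y ⟨⟨hyA, hyU⟩, hy⟩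
    exact ⟨hyA, fun hcl => hyU (connectedComponentIn_subset _ _ (not_not.1 fun h => hy ⟨hcl, h⟩))⟩

theorem exists_splitsStrongly_family_real {κ : Cardinal.{0}} (hκ : ℵ₀ ≤ κ)
    (h₁ : splittingNumber ℝ ≤ κ) :
    ∃ 𝒲 : Set (Set ℝ), (∀ W ∈ 𝒲, IsOpen W) ∧ #𝒲 ≤ κ ∧
      ∀ A : Set ℝ, A.Infinite → ∃ W ∈ 𝒲, SplitsStrongly W A := by
  obtain ⟨𝒰, h𝒰o, h𝒰, h𝒰κ⟩ := exists_splitting_family_card_eq ℝ fun _ => exists_isOpen_splits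
  replace h𝒰κ : #𝒰 ≤ κ := h𝒰κ ▸ h₁
  refine ⟨image2 componentUnion 𝒰 (𝒰 ∪ range fun q : ℚ => {(q : ℝ)}), ?_, ?_, fun A hA => ?_⟩
  · rintro _ ⟨U, hU, V, -, rfl⟩
    exact isOpen_componentUnion (h𝒰o U hU) V
  · refine mk_image2_le.trans (mul_le_of_le hκ h𝒰κ ((mk_union_le _ _).trans
      (add_le_of_le hκ h𝒰κ (mk_range_le.trans ?_))))
    simpa using hκ
  · obtain ⟨U, hU, hUA⟩ := h𝒰 A hA
    obtain ⟨V, hV, hVA⟩ := exists_splitsStrongly_componentUnion (h𝒰o U hU) hUA h𝒰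
    exact ⟨_, mem_image2_of_mem hU hV, hVA⟩

theorem exists_splitsStrongly_family_of_injective {κ : Cardinal.{0}} (hκ : ℵ₀ ≤ κ)
    (h₁ : splittingNumber ℝ ≤ κ) {Y : Type} [TopologicalSpace Y] {e : Y → ℝ}
    (he : Continuous e) (he' : Injective e) :
    ∃ 𝒰 : Set (Set Y), (∀ U ∈ 𝒰, IsOpen U) ∧ #𝒰 ≤ κ ∧
      ∀ A : Set Y, A.Infinite → ∃ U ∈ 𝒰, SplitsStrongly U A := by
  obtain ⟨𝒲, h𝒲o, h𝒲κ, h𝒲⟩ := exists_splitsStrongly_family_real hκ h₁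
  refine ⟨(e ⁻¹' ·) '' 𝒲, ?_, mk_image_le.trans h𝒲κ, fun A hA => ?_⟩
  · rintro _ ⟨W, hW, rfl⟩
    exact (h𝒲o W hW).preimage he
  · obtain ⟨W, hW, hWA⟩ := h𝒲 _ (hA.image he'.injOn)
    exact ⟨_, mem_image_of_mem _ hW, hWA.preimage he⟩

theorem cofCountableSubsets_le_one (α : Type*) [Countable α] : cofCountableSubsets α ≤ 1 :=
  csInf_le' ⟨{Set.univ}, by simpa using countable_univ, fun B _ => ⟨Set.univ, rfl, subset_univ B⟩,
    (mk_singleton _).symm⟩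

theorem aleph0_lt_of_splittingNumber_le {κ : Cardinal.{0}} (h₁ : splittingNumber ℝ ≤ κ)
    (h₂ : cofCountableSubsets (Quotient.out κ) = κ) : ℵ₀ < κ := by
  by_contra! hκ
  have : Countable (Quotient.out κ) := by rwa [← mk_le_aleph0_iff, mk_out]
  obtain ⟨𝒰, -, h𝒰, h𝒰κ⟩ := exists_splitting_family_card_eq ℝ fun _ => exists_isOpen_splits
  exact (one_lt_card_of_splits h𝒰).not_ge <|
    h𝒰κ ▸ h₁.trans (h₂ ▸ cofCountableSubsets_le_one _)

theorem exists_seq_family_of_equiv {α β : Type u} [Nonempty β] (e : α ≃ β) :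
    ∃ 𝒞 : Set (ℕ → β), #𝒞 ≤ cofCountableSubsets α ∧
      ∀ B : Set β, B.Countable → ∃ c ∈ 𝒞, B ⊆ range c := by
  obtain ⟨𝒜, h𝒜c, h𝒜, h𝒜card⟩ : cofCountableSubsets α ∈ _ :=
    csInf_mem ⟨_, {A | A.Countable}, fun _ h => h, fun B hB => ⟨B, hB, subset_rfl⟩, rfl⟩
  choose! c hc using fun A hA => countable_iff_exists_subset_range.1 ((h𝒜c A hA).image e)
  refine ⟨c '' 𝒜, h𝒜card ▸ mk_image_le, fun B hB => ?_⟩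
  obtain ⟨A, hA, hBA⟩ := h𝒜 (e.symm '' B) (hB.image _)
  exact ⟨c A, mem_image_of_mem c hA, fun b hb =>
    hc A hA ⟨e.symm b, hBA ⟨b, hb, rfl⟩, e.apply_symm_apply b⟩⟩

section WellOrder

open scoped Ordinal

variable {I : Type u} [LinearOrder I] [WellFoundedLT I]

theorem exists_forall_lt_of_seq_family (hI : ord #I = typeLT I) (hI₀ : ℵ₀ < #I)
    {𝒞 : Set (ℕ → I)} (h𝒞 : #𝒞 ≤ #I) (hcof : ∀ B : Set I, B.Countable → ∃ c ∈ 𝒞, B ⊆ range c)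
    (s : ℕ → I) : ∃ b, ∀ n, s n < b := by
  -- Diagonalise: if `s` is cofinal, pick `a n` outside the fewer than `#I` points covered by the
  -- members of `𝒞` indexed below `s n`; the member covering `range a` is indexed below some `s n`.
  by_contra! hs
  obtain ⟨ι⟩ := h𝒞
  set V : ℕ → Set I := fun n => range fun p : {c : 𝒞 // ι c ≤ s n} × ℕ => p.1.1.1 p.2
  have hV : ∀ n, ∃ a, a ∉ V n := by
    intro n
    by_contra! h
    refine (mk_range_le.trans_lt ?_).ne (eq_univ_of_forall h ▸ mk_univ)
    rw [mk_prod, lift_uzero, mk_nat, lift_aleph0]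
    refine mul_lt_of_lt hI₀.le ((mk_le_of_injective (f := fun c : {c : 𝒞 // ι c ≤ s n} =>
      (⟨ι c.1, c.2⟩ : Iic (s n))) ?_).trans_lt (mk_Iic_lt _ hI hI₀.le)) hI₀
    exact fun c c' h => Subtype.ext (ι.injective (congrArg Subtype.val h))
  choose a ha using hV
  obtain ⟨c, hc, hac⟩ := hcof (range a) (countable_range a)
  obtain ⟨n, hn⟩ := hs (ι ⟨c, hc⟩)
  obtain ⟨m, hm⟩ := hac (mem_range_self n)
  exact ha n ⟨(⟨⟨c, hc⟩, hn⟩, m), hm⟩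

theorem exists_map_unbounded_fibers {T : Type u} [Nonempty T] (hI : ord #I = typeLT I)
    (hI₀ : ℵ₀ ≤ #I) (hT : #T ≤ #I) : ∃ τ : I → T, ∀ t b, ∃ j, b < j ∧ τ j = t := by
  obtain ⟨e⟩ : Nonempty (I ≃ I × T) := by
    rw [← Cardinal.eq, mk_prod, lift_id, lift_id, Cardinal.mul_eq_left hI₀ hT (mk_ne_zero T)]
  refine ⟨fun j => (e j).2, fun t b => ?_⟩
  by_contra! h
  refine (mk_Iic_lt b hI hI₀).not_ge (mk_le_of_injective (f := fun i => ⟨e.symm (i, t), ?_⟩)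
    fun i i' hii' => congrArg Prod.fst (e.symm.injective (congrArg Subtype.val hii')))
  exact not_lt.1 fun hb => h _ hb (by simp)

end WellOrder

theorem exists_isTopologicalBasis_pi_bool (I : Type u) [Infinite I] :
    ∃ B : Set (Set (I → Bool)), TopologicalSpace.IsTopologicalBasis B ∧ #B ≤ #I := by
  classical
  set cyl : Finset (I × Bool) → Set (I → Bool) := fun s => {w | ∀ p ∈ s, w p.1 = p.2}
  refine ⟨range cyl, TopologicalSpace.isTopologicalBasis_of_isOpen_of_nhds ?_ ?_, ?_⟩
  · rintro _ ⟨s, rfl⟩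
    simp only [cyl, ofPred_forall]
    exact isOpen_biInter_finset fun p _ =>
      (isOpen_discrete {p.2}).preimage (continuous_apply (A := fun _ : I => Bool) p.1)
  · intro a u hau hu
    obtain ⟨F, u', hu', hsub⟩ := isOpen_pi_iff.1 hu a hau
    refine ⟨_, mem_range_self (F.image fun i => (i, a i)), by simp [cyl], fun w hw => hsub ?_⟩
    intro i hi
    have : w i = a i := hw (i, a i) (Finset.mem_image_of_mem _ hi)
    exact this ▸ (hu' i hi).2
  · refine mk_range_le.trans ?_
    rw [mk_finset_of_infinite, mk_prod, lift_uzero]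
    exact mul_le_of_le (aleph0_le_mk I) le_rfl
      ((lift_lt_aleph0.2 (lt_aleph0_of_finite Bool)).le.trans (aleph0_le_mk I))

theorem closure_subset_of_forall_eq_true_iff {Y Z : Type*} [TopologicalSpace Y]
    [TopologicalSpace Z] {g : Y → Bool} {h : Y → Z} (hg : Continuous g) (hh : Continuous h)
    {U : Set Z} (hU : IsOpen U) {D : Set Y} (hD : ∀ y ∈ D, g y = true ↔ h y ∈ U) :
    closure D ⊆ {y | g y = true → h y ∈ closure U} ∩ {y | g y = false → h y ∉ U} := by
  refine closure_minimal (fun y hy => ⟨fun hgy => subset_closure ((hD y hy).1 hgy),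
    fun hgy hhy => by simp [(hD y hy).2 hhy] at hgy⟩) (.inter ?_ ?_)
  · exact isClosed_imp ((isOpen_discrete {true}).preimage hg) (isClosed_closure.preimage hh)
  · exact isClosed_imp ((isOpen_discrete {false}).preimage hg) (hU.isClosed_compl.preimage hh)

theorem exists_countable_forall_eq_imp_eq {α β : Type*} {y : ℕ → α → β} (hy : Injective y) :
    ∃ B : Set α, B.Countable ∧ ∀ k k', (∀ i ∈ B, y k i = y k' i) → k = k' := by
  choose d hd using fun p : {p : ℕ × ℕ // p.1 ≠ p.2} => Function.ne_iff.1 (hy.ne p.2)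
  exact ⟨range d, countable_range d, fun k k' h => by_contra fun hne =>
    hd ⟨(k, k'), hne⟩ (h _ (mem_range_self _))⟩

theorem frequently_atTop_of_infinite_range_inter {X : Type*} {t : ℕ → X} {s : Set X}
    (h : (range t ∩ s).Infinite) : ∃ᶠ k in atTop, t k ∈ s :=
  Nat.frequently_atTop_iff_infinite.2 (Infinite.of_image t (image_preimage_eq_range_inter ▸ h))

namespace NoConvergentSequences

variable {I : Type*} [LinearOrder I] [WellFoundedLT I]
  (τ : I → ((ℕ → I) × Set (ℕ → Bool)) ⊕ ℕ)

open scoped Classical in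
/-- Coordinate `j` of the `n`-th point. The instruction `inr m` makes it the indicator of `n = m`;
`inl (c, U)` makes it record whether the trace of the point on the coordinates `c` lies in `U`
(the junk value `false` for coordinates `c m ≥ j` never matters, see `coord_of_inl`). -/
noncomputable def coord : I → ℕ → Bool :=
  wellFounded_lt.fix fun j rec => match τ j with
    | .inl (c, U) => fun n => decide ((fun m => if h : c m < j then rec (c m) h n else false) ∈ U)
    | .inr m => fun n => decide (n = m)

noncomputable def points (n : ℕ) (j : I) : Bool := coord τ j n

variable {τ}

theorem coord_of_inr {j : I} {m : ℕ} (h : τ j = .inr m) (n : ℕ) :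
    coord τ j n = true ↔ n = m := by
  rw [coord, WellFounded.fix_eq, h]
  simp

theorem coord_of_inl {j : I} {c : ℕ → I} {U : Set (ℕ → Bool)} (h : τ j = .inl (c, U))
    (hc : ∀ m, c m < j) (n : ℕ) : coord τ j n = true ↔ (fun m => coord τ (c m) n) ∈ U := by
  rw [coord, WellFounded.fix_eq, h]
  simp [hc]

theorem points_injective (hτ : ∀ m, ∃ j, τ j = .inr m) : Injective (points τ) := by
  intro a b hab
  obtain ⟨j, hj⟩ := hτ a
  have ha : points τ a j = true := (coord_of_inr hj a).2 rfl
  exact ((coord_of_inr hj b).1 ((congrFun hab j).symm.trans ha)).symm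

theorem not_tendsto_of_injective {𝒞 : Set (ℕ → I)}
    (h𝒞 : ∀ B : Set I, B.Countable → ∃ c ∈ 𝒞, B ⊆ range c) {𝒰 : Set (Set (ℕ → Bool))}
    (h𝒰o : ∀ U ∈ 𝒰, IsOpen U) (h𝒰 : ∀ A, A.Infinite → ∃ U ∈ 𝒰, SplitsStrongly U A)
    (hτ : ∀ c ∈ 𝒞, ∀ U ∈ 𝒰, ∃ j, (∀ m, c m < j) ∧ τ j = .inl (c, U))
    {y : ℕ → I → Bool} (hy : Injective y) (hyX : ∀ k, y k ∈ closure (range (points τ)))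
    (x : I → Bool) : ¬ Tendsto y atTop (𝓝 x) := by
  intro hlim
  obtain ⟨B, hBc, hB⟩ := exists_countable_forall_eq_imp_eq hy
  obtain ⟨c, hc, hBc⟩ := h𝒞 B hBc
  set trace : (I → Bool) → ℕ → Bool := fun z m => z (c m)
  have htrace : Continuous trace := continuous_pi fun m => continuous_apply (c m)
  have htrace_inj : Injective (trace ∘ y) := fun k k' h => hB k k' fun i hi => by
    obtain ⟨m, rfl⟩ := hBc hi
    exact congrFun h m
  obtain ⟨U, hU, hUin, hUout⟩ := h𝒰 _ (infinite_range_of_injective htrace_inj)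
  obtain ⟨j, hcj, hj⟩ := hτ c hc U hU
  have hX := closure_subset_of_forall_eq_true_iff (continuous_apply j) htrace (h𝒰o U hU)
    (D := range (points τ)) (by rintro _ ⟨n, rfl⟩; exact coord_of_inl hj hcj n)
  have hyj : ∀ᶠ k in atTop, y k j = x j := by
    have := tendsto_pi_nhds.1 hlim j
    rwa [nhds_discrete, tendsto_pure] at this
  cases hxj : x j
  · obtain ⟨k, hkU, hkj⟩ :=
      ((frequently_atTop_of_infinite_range_inter hUin).and_eventually hyj).exists
    exact (hX (hyX k)).2 (hkj.trans hxj) hkU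
  · obtain ⟨k, hkU, hkj⟩ :=
      ((frequently_atTop_of_infinite_range_inter hUout).and_eventually hyj).exists
    exact hkU ((hX (hyX k)).1 (hkj.trans hxj))

end NoConvergentSequences

open NoConvergentSequences

open scoped Ordinal in
theorem exists_instructions {I : Type} [LinearOrder I] [WellFoundedLT I]
    (hI : ord #I = typeLT I) (hI₀ : ℵ₀ < #I) {𝒞 : Set (ℕ → I)} (h𝒞 : #𝒞 ≤ #I)
    (hcof : ∀ B : Set I, B.Countable → ∃ c ∈ 𝒞, B ⊆ range c) {𝒰 : Set (Set (ℕ → Bool))}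
    (h𝒰 : #𝒰 ≤ #I) :
    ∃ τ : I → ((ℕ → I) × Set (ℕ → Bool)) ⊕ ℕ, (∀ m, ∃ j, τ j = .inr m) ∧
      ∀ c ∈ 𝒞, ∀ U ∈ 𝒰, ∃ j, (∀ m, c m < j) ∧ τ j = .inl (c, U) := by
  have hT : #((𝒞 × 𝒰) ⊕ ℕ) ≤ #I := by
    rw [mk_sum, mk_prod, lift_id, lift_id, lift_id, lift_uzero, mk_nat]
    exact add_le_of_le hI₀.le (mul_le_of_le hI₀.le h𝒞 h𝒰) hI₀.le
  have : Nonempty I := mk_ne_zero_iff.1 (aleph0_pos.trans hI₀).ne'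
  obtain ⟨σ, hσ⟩ := exists_map_unbounded_fibers hI hI₀.le hT
  refine ⟨Sum.map (fun p => (p.1.1, p.2.1)) id ∘ σ, fun m => ?_, fun c hc U hU => ?_⟩
  · obtain ⟨j, -, hj⟩ := hσ (.inr m) (Classical.arbitrary I)
    exact ⟨j, by simp [hj]⟩
  · obtain ⟨b, hb⟩ := exists_forall_lt_of_seq_family hI hI₀ h𝒞 hcof c
    obtain ⟨j, hbj, hj⟩ := hσ (.inl (⟨c, hc⟩, ⟨U, hU⟩)) b
    exact ⟨j, fun m => (hb m).trans hbj, by simp [hj]⟩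

/-- If `𝔰(ℝ) ≤ κ = cof([κ]^{ℵ₀}, ⊆)`, then `𝔷 ≤ κ`: there is an infinite compact Hausdorff
space of weight at most `κ` with no non-trivial convergent sequence. -/
theorem stmt7 (κ : Cardinal.{0}) (h₁ : splittingNumber ℝ ≤ κ)
    (h₂ : cofCountableSubsets (Quotient.out κ) = κ) :
    ∃ (X : Type) (t : TopologicalSpace X), Infinite X ∧ @CompactSpace X t ∧ @T2Space X t ∧
      (∃ B : Set (Set X), @TopologicalSpace.IsTopologicalBasis X t B ∧ #B ≤ κ) ∧
      ¬ ∃ (g : ℕ → X) (x : X), Function.Injective g ∧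
          Filter.Tendsto g Filter.atTop (@nhds X t x) := by
  have hκ : ℵ₀ < κ := aleph0_lt_of_splittingNumber_le h₁ h₂
  have hI : #κ.ord.ToType = κ := mk_ord_toType κ
  have : Infinite κ.ord.ToType := infinite_iff.2 (hκ.le.trans_eq hI.symm)
  obtain ⟨e⟩ : Nonempty (Quotient.out κ ≃ κ.ord.ToType) := Cardinal.eq.1 (by rw [mk_out, hI])
  obtain ⟨𝒞, h𝒞κ, h𝒞⟩ := exists_seq_family_of_equiv e
  obtain ⟨𝒰, h𝒰o, h𝒰κ, h𝒰⟩ := exists_splitsStrongly_family_of_injective hκ.le h₁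
    (continuous_subtype_val.comp cantorSetHomeomorphNatToBool.symm.continuous)
    (Subtype.val_injective.comp cantorSetHomeomorphNatToBool.symm.injective)
  obtain ⟨τ, hτinr, hτinl⟩ := exists_instructions (by rw [hI, Ordinal.type_toType])
    (hκ.trans_eq hI.symm) (h𝒞κ.trans (h₂.trans hI.symm).le) h𝒞 (h𝒰κ.trans_eq hI.symm)
  obtain ⟨B, hB, hBκ⟩ := exists_isTopologicalBasis_pi_bool κ.ord.ToType
  refine ⟨closure (range (points τ)), inferInstance,
    ((infinite_range_of_injective (points_injective hτinr)).mono subset_closure).to_subtype,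
    isCompact_iff_compactSpace.1 isClosed_closure.isCompact, inferInstance,
    ⟨_, hB.isInducing .subtypeVal, mk_image_le.trans (hBκ.trans_eq hI)⟩, ?_⟩
  rintro ⟨y, x, hy, hlim⟩
  exact not_tendsto_of_injective h𝒞 h𝒰o h𝒰 hτinl (Subtype.val_injective.comp hy)
    (fun k => (y k).2) x ((continuous_subtype_val.tendsto x).comp hlim)
end

section
/- Fix an increasing function f : ℕ → ℕ with f(0) ≥ 2. If ζ and ξ are admissible functions with dom(ζ) = dom(ξ) = n, then ζ and ξ have the same number of admissible extensions with domain n+1; namely, each has exactly C(M, N) such extensions, where M = (1/2 + 1/2^{n+1})·2^{f(n)}, N = 2^{f(n)−n−2}, and C(M, N) is the binomial coefficient. -/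
/-- `t` extends `s` (as a function on an initial segment of `ℕ`). -/
def ExtendsStr {m m' : ℕ} (t : Fin m' → Bool) (s : Fin m → Bool) : Prop :=
  ∀ (i : ℕ) (h : i < m) (h' : i < m'), t ⟨i, h'⟩ = s ⟨i, h⟩

/-- `ζ` (with domain `n`) is admissible for `f`: each `ζ i` is a subset of `2^{[f i]}` of
size `2^{f i − i − 2}` (i.e. a member of `D^f_i`), and for `i < j` no member of `ζ j`
extends a member of `ζ i`. -/
def Admissible (f : ℕ → ℕ) {n : ℕ} (ζ : (i : Fin n) → Finset (Fin (f i) → Bool)) : Prop :=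
  (∀ i : Fin n, (ζ i).card = 2 ^ (f i - i - 2)) ∧
  ∀ i j : Fin n, i < j → ∀ s ∈ ζ i, ∀ t ∈ ζ j, ¬ ExtendsStr t s

/-- A vertex `s ∈ 2^{[f k]}` is `ζ`-available if it extends no member of any `ζ i`. -/
def Available (f : ℕ → ℕ) {n : ℕ} (ζ : (i : Fin n) → Finset (Fin (f i) → Bool))
    {k : ℕ} (s : Fin (f k) → Bool) : Prop :=
  ∀ i : Fin n, ∀ t ∈ ζ i, ¬ ExtendsStr s t

/-!
A string `s ∈ 2^{[f n]}` can be put into the new level of an extension of `ζ` exactly when it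
extends no member of any `ζ i`, `i < n`. The strings of length `f n` extending a member of `ζ i`
number `|ζ i| · 2^{f n - f i} = 2^{f n - i - 2}`, and these sets are disjoint for different `i`:
a common extension of `t ∈ ζ i` and `t' ∈ ζ j`, `i < j`, would make `t'` extend `t`. So
`2^{f n} - ∑_{i<n} 2^{f n - i - 2} = (1/2 + 1/2^{n+1}) · 2^{f n}` strings are available whatever
`ζ` is, and the admissible extensions are the `2^{f n - n - 2}`-element sets of them.
-/

open Finset

section Strings

variable {l m : ℕ}

instance (t : Fin m → Bool) (s : Fin l → Bool) : Decidable (ExtendsStr t s) := by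
  unfold ExtendsStr; infer_instance

theorem extendsStr_iff_eq {s t : Fin l → Bool} : ExtendsStr s t ↔ s = t :=
  ⟨fun h => funext fun i => h i i.isLt i.isLt, fun h => h ▸ fun _ _ _ => rfl⟩

theorem ExtendsStr.of_common_extension {l' : ℕ} {s : Fin m → Bool} {t : Fin l → Bool}
    {t' : Fin l' → Bool} (hlm : l ≤ m) (ht : ExtendsStr s t) (ht' : ExtendsStr s t') :
    ExtendsStr t' t :=
  fun i hi hi' => (ht' i hi' (hi.trans_le hlm)).symm.trans (ht i hi (hi.trans_le hlm))

def extendsStrEquiv (hlm : l ≤ m) (t : Fin l → Bool) :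
    {s : Fin m → Bool // ExtendsStr s t} ≃ (Fin (m - l) → Bool) where
  toFun s j := s.1 ⟨l + j, by omega⟩
  invFun g := ⟨fun k => if h : k < l then t ⟨k, h⟩ else g ⟨k - l, by omega⟩,
    fun i h _ => by simp [h]⟩
  left_inv s := by
    ext k
    by_cases h : (k : ℕ) < l
    · simp [h, s.2 k h k.isLt]
    · simp [h, Nat.add_sub_cancel' (not_lt.1 h)]
  right_inv g := by
    ext j
    simp

theorem card_filter_extendsStr (hlm : l ≤ m) (t : Fin l → Bool) :
    #{s : Fin m → Bool | ExtendsStr s t} = 2 ^ (m - l) := by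
  rw [← Fintype.card_subtype, Fintype.card_congr (extendsStrEquiv hlm t)]
  simp

theorem card_biUnion_filter_extendsStr (hlm : l ≤ m) (A : Finset (Fin l → Bool)) :
    #(A.biUnion fun t => {s : Fin m → Bool | ExtendsStr s t}) = #A * 2 ^ (m - l) := by
  rw [card_biUnion, sum_const_nat fun t _ => card_filter_extendsStr hlm t]
  intro t _ t' _ hne
  refine disjoint_left.2 fun s hs hs' => hne ?_
  simp only [mem_filter, mem_univ, true_and] at hs hs'
  exact (extendsStr_iff_eq.1 (hs.of_common_extension hlm hs')).symm

end Strings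

theorem sum_range_two_pow_sub_add {m n : ℕ} (h : n < m) :
    ∑ i ∈ range n, 2 ^ (m - i - 2) + 2 ^ (m - n - 1) = 2 ^ (m - 1) := by
  induction n with
  | zero => simp
  | succ k ih =>
    have e1 : m - (k + 1) - 1 = m - k - 2 := by omega
    have e2 : m - k - 1 = m - k - 2 + 1 := by omega
    rw [sum_range_succ, ← ih (by omega), e1, e2, pow_succ]
    ring

theorem cast_two_pow_sub_mul_two_pow_add_one {K : Type*} [Field K] [CharZero K] {m n : ℕ}
    (h : n < m) :
    ((2 ^ (m - n - 1) * (2 ^ n + 1) : ℕ) : K) = (1 / 2 + 1 / 2 ^ (n + 1)) * 2 ^ m := by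
  have hm : (2 : K) ^ m = 2 ^ (m - n - 1) * 2 ^ (n + 1) := by
    rw [← pow_add]; congr 1; omega
  push_cast
  rw [hm]
  field_simp
  ring

theorem Fin.snoc_castSucc_eq_self {n : ℕ} {α : Fin (n + 1) → Type*} {q : ∀ i, α i}
    {p : ∀ i : Fin n, α i.castSucc} (h : ∀ i, q i.castSucc = p i) :
    Fin.snoc p (q (Fin.last n)) = q := by
  rw [show p = Fin.init q from funext fun i => (h i).symm, Fin.snoc_init_self]

def Fin.snocSubtypeEquiv {n : ℕ} {α : Fin (n + 1) → Type*} (P : (∀ i, α i) → Prop)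
    (p : ∀ i : Fin n, α i.castSucc) :
    {q // P q ∧ ∀ i, q i.castSucc = p i} ≃ {x : α (Fin.last n) // P (Fin.snoc p x)} where
  toFun q := ⟨q.1 (Fin.last n), (Fin.snoc_castSucc_eq_self q.2.2).symm ▸ q.2.1⟩
  invFun x := ⟨Fin.snoc p x, x.2, fun _ => Fin.snoc_castSucc ..⟩
  left_inv q := Subtype.ext <| Fin.snoc_castSucc_eq_self q.2.2
  right_inv _ := Subtype.ext <| Fin.snoc_last ..

section Admissible

variable {f : ℕ → ℕ} {n : ℕ}

theorem add_two_le_of_strictMono (hmono : StrictMono f) (hf0 : 2 ≤ f 0) (i : ℕ) :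
    i + 2 ≤ f i :=
  le_trans (by omega) (hmono.add_le_nat i 0)

instance (ζ : (i : Fin n) → Finset (Fin (f i) → Bool)) {k : ℕ} (s : Fin (f k) → Bool) :
    Decidable (Available f ζ s) := by
  unfold Available; infer_instance

theorem filter_not_available_eq_biUnion (ζ : (i : Fin n) → Finset (Fin (f i) → Bool))
    (k : ℕ) :
    ({s : Fin (f k) → Bool | ¬Available f ζ s} : Finset _) =
      univ.biUnion fun i => (ζ i).biUnion fun t => {s | ExtendsStr s t} := by
  ext s
  simp [Available]

theorem card_filter_not_available (hmono : StrictMono f) (hf0 : 2 ≤ f 0)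
    {ζ : (i : Fin n) → Finset (Fin (f i) → Bool)} (hζ : Admissible f ζ) :
    #{s : Fin (f n) → Bool | ¬Available f ζ s} = ∑ i ∈ range n, 2 ^ (f n - i - 2) := by
  have hle : ∀ i : Fin n, f i ≤ f n := fun i => hmono.monotone i.isLt.le
  rw [filter_not_available_eq_biUnion, card_biUnion, ← Fin.sum_univ_eq_sum_range]
  · refine sum_congr rfl fun i _ => ?_
    rw [card_biUnion_filter_extendsStr (hle i), hζ.1 i, ← pow_add]
    have hi := add_two_le_of_strictMono hmono hf0 i
    have hfi := hle i
    congr 1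
    omega
  · refine ((pairwise_disjoint_on _).2 fun i j hij => disjoint_left.2 fun s hs hs' => ?_)
      |>.set_pairwise _
    simp only [mem_biUnion, mem_filter, mem_univ, true_and] at hs hs'
    obtain ⟨t, ht, hst⟩ := hs
    obtain ⟨t', ht', hst'⟩ := hs'
    exact hζ.2 i j hij t ht t' ht' (hst.of_common_extension (hle i) hst')

theorem card_filter_available (hmono : StrictMono f) (hf0 : 2 ≤ f 0)
    {ζ : (i : Fin n) → Finset (Fin (f i) → Bool)} (hζ : Admissible f ζ) :
    #{s : Fin (f n) → Bool | Available f ζ s} = 2 ^ (f n - n - 1) * (2 ^ n + 1) := by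
  have hn := add_two_le_of_strictMono hmono hf0 n
  have htotal :=
    card_filter_add_card_filter_not (s := univ) fun s : Fin (f n) → Bool => Available f ζ s
  rw [card_filter_not_available hmono hf0 hζ, card_univ, Fintype.card_fun, Fintype.card_bool,
    Fintype.card_fin] at htotal
  have hsum := sum_range_two_pow_sub_add (m := f n) (n := n) (by omega)
  have h1 : 2 ^ (f n - n - 1) * 2 ^ n = 2 ^ (f n - 1) := by rw [← pow_add]; congr 1; omega
  have h2 : 2 ^ f n = 2 * 2 ^ (f n - 1) := by rw [← pow_succ']; congr 1; omega
  rw [mul_add, mul_one, h1]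
  omega

theorem admissible_snoc_iff {ζ : (i : Fin n) → Finset (Fin (f i) → Bool)}
    {A : Finset (Fin (f n) → Bool)} :
    Admissible f (Fin.snoc (α := fun i : Fin (n + 1) => Finset (Fin (f i) → Bool)) ζ A) ↔
      Admissible f ζ ∧ #A = 2 ^ (f n - n - 2) ∧ ∀ s ∈ A, Available f ζ s := by
  simp only [Admissible, Available, Fin.forall_fin_succ', Fin.snoc_castSucc, Fin.snoc_last,
    Fin.castSucc_lt_castSucc_iff, Fin.castSucc_lt_last, Fin.val_castSucc, Fin.val_last,
    lt_irrefl, (Fin.castSucc_lt_last _).not_gt, false_imp_iff, true_imp_iff, forall_and,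
    implies_true, and_true]
  exact ⟨fun ⟨⟨hcard, hA⟩, hdisj, hav⟩ => ⟨⟨hcard, hdisj⟩, hA, fun s hs i t ht => hav i t ht s hs⟩,
    fun ⟨⟨hcard, hdisj⟩, hA, hav⟩ => ⟨⟨hcard, hA⟩, hdisj, fun i t ht s hs => hav s hs i t ht⟩⟩

theorem card_admissible_extensions (hmono : StrictMono f) (hf0 : 2 ≤ f 0)
    {ζ : (i : Fin n) → Finset (Fin (f i) → Bool)} (hζ : Admissible f ζ) :
    Nat.card {ζ' : (i : Fin (n + 1)) → Finset (Fin (f i) → Bool) //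
        Admissible f ζ' ∧ ∀ i : Fin n, ζ' i.castSucc = ζ i} =
      (2 ^ (f n - n - 1) * (2 ^ n + 1)).choose (2 ^ (f n - n - 2)) := by
  have hlast : ∀ A : Finset (Fin (f n) → Bool),
      Admissible f (Fin.snoc (α := fun i : Fin (n + 1) => Finset (Fin (f i) → Bool)) ζ A) ↔
        A ∈ powersetCard (2 ^ (f n - n - 2)) {s | Available f ζ s} := by
    intro A
    simp only [admissible_snoc_iff, hζ, true_and, mem_powersetCard, subset_iff, mem_filter,
      mem_univ, and_comm]
  have e := (Fin.snocSubtypeEquiv (α := fun i : Fin (n + 1) => Finset (Fin (f i) → Bool))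
    (Admissible f) ζ).trans (Equiv.subtypeEquivRight hlast)
  rw [Nat.card_congr e, Nat.card_eq_fintype_card, Fintype.card_coe, card_powersetCard,
    card_filter_available hmono hf0 hζ]

end Admissible

/-- Claim: any two admissible functions with domain `n` have the same number of admissible
extensions with domain `n+1`, namely `C(M, N)` where `M = (1/2 + 1/2^{n+1})·2^{f n}` and
`N = 2^{f n − n − 2}`. -/
theorem stmt18 (f : ℕ → ℕ) (hmono : StrictMono f) (hf0 : 2 ≤ f 0)
    {n : ℕ} (ζ ξ : (i : Fin n) → Finset (Fin (f i) → Bool))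
    (hζ : Admissible f ζ) (hξ : Admissible f ξ) :
    Nat.card {ζ' : (i : Fin (n + 1)) → Finset (Fin (f i) → Bool) //
        Admissible f ζ' ∧ ∀ i : Fin n, ζ' i.castSucc = ζ i} =
      Nat.card {ξ' : (i : Fin (n + 1)) → Finset (Fin (f i) → Bool) //
        Admissible f ξ' ∧ ∀ i : Fin n, ξ' i.castSucc = ξ i} ∧
    ∀ M N : ℕ, (M : ℚ) = (1 / 2 + 1 / 2 ^ (n + 1)) * 2 ^ (f n) → N = 2 ^ (f n - n - 2) →
      Nat.card {ζ' : (i : Fin (n + 1)) → Finset (Fin (f i) → Bool) //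
        Admissible f ζ' ∧ ∀ i : Fin n, ζ' i.castSucc = ζ i} = M.choose N := by
  rw [card_admissible_extensions hmono hf0 hζ, card_admissible_extensions hmono hf0 hξ]
  refine ⟨rfl, fun M N hM hN => ?_⟩
  have hn := add_two_le_of_strictMono hmono hf0 n
  have hM' : M = 2 ^ (f n - n - 1) * (2 ^ n + 1) := by
    exact_mod_cast hM.trans (cast_two_pow_sub_mul_two_pow_add_one (by omega)).symm
  rw [hM', hN]
end
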